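/- arXiv:math/0210244 — 7 statements merged into one kernel-verified Lean document; each statement's English description precedes it below -/
import Mathlib

section
/- Let α, β, γ, α′, β′, γ′ be complex numbers, all nonzero, such that P₀ = 0, P₁ = 0 and P₂ = 0. Then (α³ + β³ + γ³)³ = (3αβγ)³. -/
/-- Inner step: once we know `p^3*β^3 = q^3*α^3`, the other equalities follow
and the conclusion holds. -/
lemma aux2 (α β γ p q r : ℂ)
    (hα : α ≠ 0) (hβ : β ≠ 0) (hγ : γ ≠ 0)
    (hp : p ≠ 0) (hq : q ≠ 0) (hr : r ≠ 0)
    (h0 : p + q + r = 0)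
    (hE1 : p^4*β^3*γ^3 + q^4*α^3*γ^3 + r^4*α^3*β^3 = 0)
    (h1 : p^3*β^3 = q^3*α^3) :
    (α^3 + β^3 + γ^3)^3 = (3*α*β*γ)^3 := by
  have hβ3 : β^3 ≠ 0 := pow_ne_zero _ hβ
  have hα3 : α^3 ≠ 0 := pow_ne_zero _ hα
  have hγ3 : γ^3 ≠ 0 := pow_ne_zero _ hγ
  -- derive p^3*γ^3 = r^3*α^3
  have h2' : r*β^3*(r^3*α^3 - p^3*γ^3) = 0 := by
    linear_combination hE1 + q*γ^3*h1 - β^3*γ^3*p^3*h0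
  have h2 : p^3*γ^3 = r^3*α^3 := by
    have := (mul_eq_zero.mp h2').resolve_left (mul_ne_zero hr hβ3)
    linear_combination -this
  -- derive q^3*γ^3 = r^3*β^3
  have h3 : q^3*γ^3 = r^3*β^3 := by
    have h3' : α^3*(q^3*γ^3 - r^3*β^3) = 0 := by
      linear_combination -γ^3*h1 + β^3*h2
    have := (mul_eq_zero.mp h3').resolve_left hα3
    linear_combination this
  -- the three scaled sum identities
  have hS1 : (α^3 + β^3 + γ^3)*p^3 = 3*α^3*(p*q*r) := by
    linear_combination h1 + h2 + α^3*(p^2 + q^2 + r^2 - p*q - q*r - p*r)*h0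
  have hS2 : (α^3 + β^3 + γ^3)*q^3 = 3*β^3*(p*q*r) := by
    linear_combination -h1 + h3 + β^3*(p^2 + q^2 + r^2 - p*q - q*r - p*r)*h0
  have hS3 : (α^3 + β^3 + γ^3)*r^3 = 3*γ^3*(p*q*r) := by
    linear_combination -h2 - h3 + γ^3*(p^2 + q^2 + r^2 - p*q - q*r - p*r)*h0
  have k1 : ((α^3 + β^3 + γ^3)*p^3) * (((α^3 + β^3 + γ^3)*q^3) * ((α^3 + β^3 + γ^3)*r^3))
      = (3*α^3*(p*q*r)) * ((3*β^3*(p*q*r)) * (3*γ^3*(p*q*r))) := by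
    rw [hS1, hS2, hS3]
  have key : (α^3 + β^3 + γ^3)^3 * (p*q*r)^3 = (3*α*β*γ)^3 * (p*q*r)^3 := by
    linear_combination k1
  exact mul_right_cancel₀ (pow_ne_zero _ (mul_ne_zero (mul_ne_zero hp hq) hr)) key

/-- Main auxiliary lemma with chosen square roots satisfying `p+q+r=0`. -/
lemma aux (α β γ p q r : ℂ)
    (hα : α ≠ 0) (hβ : β ≠ 0) (hγ : γ ≠ 0)
    (hp : p ≠ 0) (hq : q ≠ 0) (hr : r ≠ 0)
    (h0 : p + q + r = 0)
    (hE1 : p^4*β^3*γ^3 + q^4*α^3*γ^3 + r^4*α^3*β^3 = 0)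
    (hE2 : α^3*q^2*r^2 + β^3*p^2*r^2 + γ^3*p^2*q^2 = 0) :
    (α^3 + β^3 + γ^3)^3 = (3*α*β*γ)^3 := by
  have hβ3 : β^3 ≠ 0 := pow_ne_zero _ hβ
  have hα3 : α^3 ≠ 0 := pow_ne_zero _ hα
  have hγ3 : γ^3 ≠ 0 := pow_ne_zero _ hγ
  have hdet : (p^3*β^3 - q^3*α^3) * ((q^3*γ^3 - r^3*β^3) * (r^3*α^3 - p^3*γ^3)) = 0 := by
    linear_combination (p^2*α^3*(q^6*γ^6 - r^6*β^6))*h0 - (p^2*(q^3*γ^3 - r^3*β^3))*hE1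
      + (α^3*(q*r^4*β^3 - r*q^4*γ^3))*hE2
  rcases mul_eq_zero.mp hdet with h | h
  · exact aux2 α β γ p q r hα hβ hγ hp hq hr h0 hE1 (by linear_combination h)
  rcases mul_eq_zero.mp h with h | h
  · -- q^3*γ^3 = r^3*β^3; derive p^3*γ^3 = r^3*α^3 then p^3*β^3 = q^3*α^3
    have h2' : p*β^3*(p^3*γ^3 - r^3*α^3) = 0 := by
      linear_combination hE1 - q*α^3*h - β^3*r^3*α^3*h0
    have h2 : p^3*γ^3 = r^3*α^3 := by
      have := (mul_eq_zero.mp h2').resolve_left (mul_ne_zero hp hβ3)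
      linear_combination this
    have h1' : γ^3*(p^3*β^3 - q^3*α^3) = 0 := by
      linear_combination β^3*h2 - α^3*h
    have h1 : p^3*β^3 = q^3*α^3 := by
      have := (mul_eq_zero.mp h1').resolve_left hγ3
      linear_combination this
    exact aux2 α β γ p q r hα hβ hγ hp hq hr h0 hE1 h1
  · -- r^3*α^3 = p^3*γ^3; derive p^3*β^3 = q^3*α^3
    have h1' : γ^3*q*(q^3*α^3 - p^3*β^3) = 0 := by
      linear_combination hE1 - r*β^3*h - γ^3*p^3*β^3*h0
    have h1 : p^3*β^3 = q^3*α^3 := by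
      have := (mul_eq_zero.mp h1').resolve_left (mul_ne_zero hγ3 hq)
      linear_combination -this
    exact aux2 α β γ p q r hα hβ hγ hp hq hr h0 hE1 h1

theorem stmt_0 (α β γ α' β' γ' : ℂ)
    (hα : α ≠ 0) (hβ : β ≠ 0) (hγ : γ ≠ 0)
    (hα' : α' ≠ 0) (hβ' : β' ≠ 0) (hγ' : γ' ≠ 0)
    (hP0 : α^2*α'^2 + β^2*β'^2 + γ^2*γ'^2
      - 2*(α*α')*(β*β') - 2*(α*α')*(γ*γ') - 2*(β*β')*(γ*γ') = 0)
    (hP1 : α^2*β'*γ' + β^2*α'*γ' + γ^2*α'*β' = 0)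
    (hP2 : α'^2*β*γ + β'^2*α*γ + γ'^2*α*β = 0) :
    (α^3 + β^3 + γ^3)^3 = (3*α*β*γ)^3 := by
  obtain ⟨p, hp⟩ : ∃ p : ℂ, p^2 = α*α' := IsAlgClosed.exists_pow_nat_eq _ zero_lt_two
  obtain ⟨q, hq⟩ : ∃ q : ℂ, q^2 = β*β' := IsAlgClosed.exists_pow_nat_eq _ zero_lt_two
  obtain ⟨r, hr⟩ : ∃ r : ℂ, r^2 = γ*γ' := IsAlgClosed.exists_pow_nat_eq _ zero_lt_two
  have hpz : p ≠ 0 := by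
    intro h; apply mul_ne_zero hα hα'; rw [← hp, h]; ring
  have hqz : q ≠ 0 := by
    intro h; apply mul_ne_zero hβ hβ'; rw [← hq, h]; ring
  have hrz : r ≠ 0 := by
    intro h; apply mul_ne_zero hγ hγ'; rw [← hr, h]; ring
  have hE1 : p^4*β^3*γ^3 + q^4*α^3*γ^3 + r^4*α^3*β^3 = 0 := by
    linear_combination α^2*β^2*γ^2*hP2 + (p^2 + α*α')*β^3*γ^3*hp
      + (q^2 + β*β')*α^3*γ^3*hq + (r^2 + γ*γ')*α^3*β^3*hr
  have hE2 : α^3*q^2*r^2 + β^3*p^2*r^2 + γ^3*p^2*q^2 = 0 := by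
    linear_combination α*β*γ*hP1 + (α^3*r^2)*hq + (α^3*β*β')*hr
      + (β^3*r^2)*hp + (β^3*α*α')*hr + (γ^3*q^2)*hp + (γ^3*α*α')*hq
  have hprod : (p + q + r) * ((p + q - r) * ((p - q + r) * (p - q - r))) = 0 := by
    linear_combination hP0 + (p^2 + α*α' - 2*q^2 - 2*r^2)*hp
      + (q^2 + β*β' - 2*r^2 - 2*α*α')*hq + (r^2 + γ*γ' - 2*α*α' - 2*β*β')*hr
  rcases mul_eq_zero.mp hprod with h | h
  · exact aux α β γ p q r hα hβ hγ hpz hqz hrz h hE1 hE2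
  rcases mul_eq_zero.mp h with h | h
  · exact aux α β γ p q (-r) hα hβ hγ hpz hqz (neg_ne_zero.mpr hrz)
      (by linear_combination h) (by linear_combination hE1) (by linear_combination hE2)
  rcases mul_eq_zero.mp h with h | h
  · exact aux α β γ p (-q) r hα hβ hγ hpz (neg_ne_zero.mpr hqz) hrz
      (by linear_combination h) (by linear_combination hE1) (by linear_combination hE2)
  · exact aux α β γ p (-q) (-r) hα hβ hγ hpz (neg_ne_zero.mpr hqz) (neg_ne_zero.mpr hrz)
      (by linear_combination h) (by linear_combination hE1) (by linear_combination hE2)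
end

section
/- Let α, β, γ, α′, β′, γ′ be complex numbers satisfying αα′ + ββ′ + γγ′ = 1 and P₀ = P₁ = P₂ = 0. Then αβγ = 0 or (α³ + β³ + γ³)³ = (3αβγ)³. -/
/-- Auxiliary: under the normalization and the `P₀, P₁` conditions, if `b ≠ 0`
then `b' ≠ 0`.  (Symmetric in the three pairs of variables.) -/
lemma stmt_1_aux (a b c a' b' c' : ℂ) (hb : b ≠ 0)
    (hnorm : a*a' + b*b' + c*c' = 1)
    (h2 : (a*a')*(b*b') + (a*a')*(c*c') + (b*b')*(c*c') = 1/4)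
    (hP1 : a^2*b'*c' + b^2*a'*c' + c^2*a'*b' = 0) : b' ≠ 0 := by
  intro h
  have hsum : a*a' + c*c' = 1 := by linear_combination hnorm - b*h
  have hsq : (a*a' - c*c')^2 = 0 := by
    linear_combination (a*a'+c*c'+1)*hnorm - 4*h2 + b*(3*(a*a')+3*(c*c')-1)*h
  have hd : a*a' - c*c' = 0 := pow_eq_zero_iff (two_ne_zero) |>.mp hsq
  have hu : a*a' = 1/2 := by linear_combination (hsum + hd)/2
  have hw : c*c' = 1/2 := by linear_combination (hsum - hd)/2
  have ha' : a' ≠ 0 := by intro h'; rw [h', mul_zero] at hu; norm_num at hu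
  have hc' : c' ≠ 0 := by intro h'; rw [h', mul_zero] at hw; norm_num at hw
  have hb2 : b^2*a'*c' = 0 := by linear_combination hP1 - (a^2*c' + c^2*a')*h
  exact (mul_ne_zero (mul_ne_zero (pow_ne_zero 2 hb) ha') hc') hb2

theorem stmt_1 (α β γ α' β' γ' : ℂ)
    (hnorm : α*α' + β*β' + γ*γ' = 1)
    (hP0 : α^2*α'^2 + β^2*β'^2 + γ^2*γ'^2
      - 2*(α*α')*(β*β') - 2*(α*α')*(γ*γ') - 2*(β*β')*(γ*γ') = 0)
    (hP1 : α^2*β'*γ' + β^2*α'*γ' + γ^2*α'*β' = 0)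
    (hP2 : α'^2*β*γ + β'^2*α*γ + γ'^2*α*β = 0) :
    α*β*γ = 0 ∨ (α^3 + β^3 + γ^3)^3 = (3*α*β*γ)^3 := by
  rcases eq_or_ne (α*β*γ) 0 with h | hq
  · exact Or.inl h
  right
  have hαβ : α*β ≠ 0 := left_ne_zero_of_mul hq
  have hα : α ≠ 0 := left_ne_zero_of_mul hαβ
  have hβ : β ≠ 0 := right_ne_zero_of_mul hαβ
  have hγ : γ ≠ 0 := right_ne_zero_of_mul hq
  have h2 : (α*α')*(β*β') + (α*α')*(γ*γ') + (β*β')*(γ*γ') = 1/4 := by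
    linear_combination ((α*α'+β*β'+γ*γ'+1)/4) * hnorm - (1/4)*hP0
  have hα' : α' ≠ 0 := by
    refine stmt_1_aux β α γ β' α' γ' hα ?_ ?_ ?_
    · linear_combination hnorm
    · linear_combination h2
    · linear_combination hP1
  have hβ' : β' ≠ 0 := stmt_1_aux α β γ α' β' γ' hβ hnorm h2 hP1
  have hγ' : γ' ≠ 0 := by
    refine stmt_1_aux α γ β α' γ' β' hγ ?_ ?_ ?_
    · linear_combination hnorm
    · linear_combination h2
    · linear_combination hP1
  have hu' : α*α' ≠ 0 := mul_ne_zero hα hα'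
  have hv' : β*β' ≠ 0 := mul_ne_zero hβ hβ'
  have hw' : γ*γ' ≠ 0 := mul_ne_zero hγ hγ'
  -- cleared forms of P₁ and P₂
  have hg3 : α^3*((β*β')*(γ*γ')) + β^3*((α*α')*(γ*γ')) + γ^3*((α*α')*(β*β')) = 0 := by
    linear_combination (α*β*γ)*hP1
  have hg4 : (α*α')^2*(β^3*γ^3) + (β*β')^2*(α^3*γ^3) + (γ*γ')^2*(α^3*β^3) = 0 := by
    linear_combination (α^2*β^2*γ^2)*hP2
  -- the key square relation
  have hK2 : ((γ*γ') * (2*(β*β')^2*α^3 - (2*(γ*γ')-1)*((α*α')*β^3)))^2 = 0 := by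
    linear_combination
      (4*(β*β')*(γ*γ')*((α*α')^2*β^3 + (β*β')^2*α^3))*hg3
      - (4*(α*α')*(β*β')^2*(γ*γ'))*hg4
      + (-4*(α*α')*(β*β')^2*(γ*γ')^2*(α^3*β^3) + 4*(α*α')^2*(γ*γ')^3*β^6)*hnorm
      - 4*(α*α')^2*(γ*γ')^2*β^6*h2
  have hKc : 2*(β*β')^2*α^3 - (2*(γ*γ')-1)*((α*α')*β^3) = 0 := by
    have h0 := pow_eq_zero_iff (two_ne_zero) |>.mp hK2
    exact (mul_eq_zero.mp h0).resolve_left hw'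
  have hs2 : 2*(β*β')^2*α^3 = (2*(γ*γ')-1)*((α*α')*β^3) := by linear_combination hKc
  have hr2 : 2*(α*α')*(β*β')^3*γ^3 = (α*α')*(β*β')*(γ*γ')*β^3*(2*(α*α')-1) := by
    linear_combination 2*(β*β')^2*hg3 - (β*β')*(γ*γ')*hKc - 2*(α*α')*(β*β')*(γ*γ')*β^3*hnorm
  have H1 : 2*(α*α')*(β*β')^3*(α^3+β^3+γ^3)
      = (α*α')*(β*β')*β^3*(4*(α*α')*(γ*γ') - (α*α') - (γ*γ') + 2*(β*β')^2) := by
    linear_combination (α*α')*(β*β')*hs2 + hr2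
  have hM : (4*(α*α')*(γ*γ') - (α*α') - (γ*γ') + 2*(β*β')^2)^3
      = 54*(α*α')*(β*β')^2*(γ*γ')*(2*(α*α')-1)*(2*(γ*γ')-1) := by
    linear_combination
      ((-1)*1 + (7)*(γ*γ') + (-17)*(γ*γ')^2 + (16)*(γ*γ')^3 + (-2)*(β*β')
        + (5)*(β*β')*(γ*γ') + (-16)*(β*β')*(γ*γ')^2 + (64)*(β*β')*(γ*γ')^3
        + (-64)*(β*β')*(γ*γ')^4 + (1)*(β*β')^2 + (20)*(β*β')^2*(γ*γ')
        + (-16)*(β*β')^2*(γ*γ')^2 + (-64)*(β*β')^2*(γ*γ')^3 + (6)*(β*β')^3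
        + (-56)*(β*β')^3*(γ*γ')^2 + (8)*(β*β')^4 + (8)*(β*β')^5 + (-1)*(α*α')
        + (10)*(α*α')*(γ*γ') + (-36)*(α*α')*(γ*γ')^2 + (64)*(α*α')*(γ*γ')^3
        + (-64)*(α*α')*(γ*γ')^4 + (1)*(α*α')*(β*β') + (-12)*(α*α')*(β*β')*(γ*γ')
        + (48)*(α*α')*(β*β')*(γ*γ')^2 + (-64)*(α*α')*(β*β')*(γ*γ')^3
        + (6)*(α*α')*(β*β')^2 + (60)*(α*α')*(β*β')^2*(γ*γ')
        + (-120)*(α*α')*(β*β')^2*(γ*γ')^2 + (-1)*(α*α')^2 + (12)*(α*α')^2*(γ*γ')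
        + (-48)*(α*α')^2*(γ*γ')^2 + (64)*(α*α')^2*(γ*γ')^3)*hnorm
      + ((4)*1 + (-32)*(γ*γ') + (96)*(γ*γ')^2 + (-128)*(γ*γ')^3 + (64)*(γ*γ')^4
        + (4)*(β*β') + (16)*(β*β')*(γ*γ') + (-112)*(β*β')*(γ*γ')^2
        + (128)*(β*β')*(γ*γ')^3 + (-12)*(β*β')^2 + (-40)*(β*β')^2*(γ*γ')
        + (120)*(β*β')^2*(γ*γ')^2 + (-20)*(β*β')^3 + (56)*(β*β')^3*(γ*γ')
        + (-8)*(β*β')^4)*h2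
  have H3 : 4*(α*α')*(β*β')^5*(α^3*γ^3)
      = (α*α')^2*(β*β')*(γ*γ')*β^6*(2*(α*α')-1)*(2*(γ*γ')-1) := by
    linear_combination 2*(β*β')^2*α^3*hr2 + (α*α')*(β*β')*(γ*γ')*β^3*(2*(α*α')-1)*hs2
  have hfin : (2*(α*α')*(β*β')^3)^3 * ((α^3+β^3+γ^3)^3 - (3*(α*β*γ))^3) = 0 := by
    linear_combination
      ((2*(α*α')*(β*β')^3)^2*(α^3+β^3+γ^3)^2
        + (2*(α*α')*(β*β')^3)*(α^3+β^3+γ^3)*((α*α')*(β*β')*β^3*(4*(α*α')*(γ*γ') - (α*α') - (γ*γ') + 2*(β*β')^2))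
        + ((α*α')*(β*β')*β^3)^2*(4*(α*α')*(γ*γ') - (α*α') - (γ*γ') + 2*(β*β')^2)^2)*H1
      + ((α*α')^3*(β*β')^3*β^9)*hM
      - 54*(α*α')^2*(β*β')^4*β^3*H3
  have hL : (2*(α*α')*(β*β')^3)^3 ≠ 0 := by
    apply pow_ne_zero
    exact mul_ne_zero (mul_ne_zero two_ne_zero hu') (pow_ne_zero 3 hv')
  have hz := (mul_eq_zero.mp hfin).resolve_left hL
  linear_combination hz
end

section
/- Let α, β, γ, β′, γ′ be complex numbers with α ≠ 0, β′ ≠ 0 and γ′ ≠ 0. If there exists a complex number α′ such that P₀ = 0 and P₁ = 0, then Q₁ = 0. -/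
theorem stmt_4 (α β γ β' γ' : ℂ)
    (hα : α ≠ 0) (hβ' : β' ≠ 0) (hγ' : γ' ≠ 0)
    (h : ∃ α' : ℂ,
      α^2*α'^2 + β^2*β'^2 + γ^2*γ'^2
        - 2*(α*α')*(β*β') - 2*(α*α')*(γ*γ') - 2*(β*β')*(γ*γ') = 0 ∧
      α^2*β'*γ' + β^2*α'*γ' + γ^2*α'*β' = 0) :
    β^2*γ^4*β'^4 + 2*(α^3 + β^3 - γ^3)*β*γ^2*β'^3*γ'
      + (α^6 + β^6 + γ^6 + 2*α^3*β^3 + 2*α^3*γ^3 - 4*β^3*γ^3)*β'^2*γ'^2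
      + 2*(α^3 + γ^3 - β^3)*β^2*γ*β'*γ'^3 + β^4*γ^2*γ'^4 = 0 := by
  obtain ⟨α', h1, h2⟩ := h
  linear_combination (β^2*γ'+γ^2*β')^2 * h1
    - (α^2*((β^2*γ'+γ^2*β')*α' - α^2*β'*γ')
        + (-2*α*β*β'-2*α*γ*γ')*(β^2*γ'+γ^2*β')) * h2
end

section
/- Let α, β, γ, γ′ be complex numbers, all nonzero. If there exists a complex number β′ such that Q₁ = 0 and Q₂ = 0, then (α³ + β³ + γ³)³ = (3αβγ)³. -/
theorem stmt_6 (α β γ γ' : ℂ)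
    (hα : α ≠ 0) (hβ : β ≠ 0) (hγ : γ ≠ 0) (hγ' : γ' ≠ 0)
    (h : ∃ β' : ℂ,
      β^2*γ^4*β'^4 + 2*(α^3 + β^3 - γ^3)*β*γ^2*β'^3*γ'
        + (α^6 + β^6 + γ^6 + 2*α^3*β^3 + 2*α^3*γ^3 - 4*β^3*γ^3)*β'^2*γ'^2
        + 2*(α^3 + γ^3 - β^3)*β^2*γ*β'*γ'^3 + β^4*γ^2*γ'^4 = 0 ∧
      α*γ^5*β'^4 + 2*α*β^2*γ^3*β'^3*γ'
        + (α^3 + β^3 + γ^3)*α*β*γ*β'^2*γ'^2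
        + 2*α*β^3*γ^2*β'*γ'^3 + α*β^5*γ'^4 = 0) :
    (α^3 + β^3 + γ^3)^3 = (3*α*β*γ)^3 := by
  obtain ⟨β', h1, h2⟩ := h
  have key : α^4*β^5*γ'^7 * ((α^3 + β^3 + γ^3)^3 - (3*α*β*γ)^3) = 0 := by
    linear_combination ((-α*β*γ^10*γ'^3-7*α*β^4*γ^7*γ'^3-3*α^4*β*γ^7*γ'^3+18*α^4*β^4*γ^4*γ'^3-α^4*β^7*γ*γ'^3-3*α^7*β*γ^4*γ'^3-2*α^7*β^4*γ*γ'^3-α^10*β*γ*γ'^3)+(-6*α*β^2*γ^9*γ'^2-2*α^4*β^2*γ^6*γ'^2+4*α^4*β^5*γ^3*γ'^2+4*α^7*β^2*γ^3*γ'^2)*β'+(-α*γ^11*γ'-7*α*β^3*γ^8*γ'-2*α^4*γ^8*γ'+11*α^4*β^3*γ^5*γ'-α^7*γ^5*γ')*β'^2+(-6*α*β*γ^10+6*α^4*β*γ^7)*β'^3) * h1 + ((γ^12*γ'^3+7*β^3*γ^9*γ'^3+4*α^3*γ^9*γ'^3-15*α^3*β^3*γ^6*γ'^3+4*α^3*β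^6*γ^3*γ'^3+α^3*β^9*γ'^3+6*α^6*γ^6*γ'^3-19*α^6*β^3*γ^3*γ'^3+3*α^6*β^6*γ'^3+4*α^9*γ^3*γ'^3+3*α^9*β^3*γ'^3+α^12*γ'^3)+(4*β*γ^11*γ'^2-14*β^4*γ^8*γ'^2+4*α^3*β*γ^8*γ'^2+26*α^3*β^4*γ^5*γ'^2-4*α^3*β^7*γ^2*γ'^2-4*α^6*β*γ^5*γ'^2-8*α^6*β^4*γ^2*γ'^2-4*α^9*β*γ^2*γ'^2)*β'+(-11*β^2*γ^10*γ'+7*β^5*γ^7*γ'+26*α^3*β^2*γ^7*γ'-11*α^3*β^5*γ^4*γ'-11*α^6*β^2*γ^4*γ')*β'^2+(6*β^3*γ^9-6*α^3*β^3*γ^6)*β'^3) * h2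
  have hm : α^4*β^5*γ'^7 ≠ 0 :=
    mul_ne_zero (mul_ne_zero (pow_ne_zero _ hα) (pow_ne_zero _ hβ)) (pow_ne_zero _ hγ')
  rcases mul_eq_zero.mp key with h0 | h0
  · exact absurd h0 hm
  · exact sub_eq_zero.mp h0
end

section
/- Let j be a complex number with j² + j + 1 = 0, and let α, β, γ, α′, β′, γ′ be complex numbers, all nonzero, satisfying P₀ = P₁ = P₂ = 0 and (α+β)³ + γ³ ≠ 0. Then there exists a complex number ζ with ζ³ = 1 such that ζγ + jα + j²β = 0 or ζγ + j²α + jβ = 0. -/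
theorem stmt_10 (j : ℂ) (hj : j^2 + j + 1 = 0)
    (α β γ α' β' γ' : ℂ)
    (hα : α ≠ 0) (hβ : β ≠ 0) (hγ : γ ≠ 0)
    (hα' : α' ≠ 0) (hβ' : β' ≠ 0) (hγ' : γ' ≠ 0)
    (hP0 : α^2*α'^2 + β^2*β'^2 + γ^2*γ'^2
      - 2*(α*α')*(β*β') - 2*(α*α')*(γ*γ') - 2*(β*β')*(γ*γ') = 0)
    (hP1 : α^2*β'*γ' + β^2*α'*γ' + γ^2*α'*β' = 0)
    (hP2 : α'^2*β*γ + β'^2*α*γ + γ'^2*α*β = 0)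
    (hell : (α + β)^3 + γ^3 ≠ 0) :
    ∃ ζ : ℂ, ζ^3 = 1 ∧ (ζ*γ + j*α + j^2*β = 0 ∨ ζ*γ + j^2*α + j*β = 0) := by
  have hj3 : j^3 = 1 := by linear_combination (j - 1) * hj
  have hM : α' * β' * γ' ≠ 0 := mul_ne_zero (mul_ne_zero hα' hβ') hγ'
  have key : (α^3 + β^3 + γ^3)^3 - 27*(α^3*β^3*γ^3) = 0 := by
    have h : α' * β' * γ' * ((α^3 + β^3 + γ^3)^3 - 27*(α^3*β^3*γ^3)) = 0 := by
      linear_combination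
        (((-1)*β^2*γ^5*α') + ((-1)*β^5*γ^2*α') + ((-1)*α^2*γ^5*β') + (2*α^2*β^2*γ^3*γ') + (2*α^2*β^3*γ^2*β') + ((-1)*α^2*β^5*γ') + (2*α^3*β^2*γ^2*α') + ((-1)*α^5*γ^2*β') + ((-1)*α^5*β^2*γ')) * hP0
        + ((γ^7*γ') + (β^3*γ^4*γ') + (β^4*γ^3*β') + (β^7*β') + ((-3)*α*β^3*γ^3*α') + (α^3*γ^4*γ') + ((-3)*α^3*β*γ^3*β') + ((-3)*α^3*β^3*γ*γ') + (α^3*β^4*β') + (α^4*γ^3*α') + (α^4*β^3*α') + (α^7*α')) * hP1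
        + (((-2)*α*β*γ^5*γ') + (α*β^2*γ^4*β') + (α*β^4*γ^2*γ') + ((-2)*α*β^5*γ*β') + (α^2*β*γ^4*α') + (α^2*β^4*γ*α') + (α^4*β*γ^2*γ') + (α^4*β^2*γ*β') + ((-2)*α^5*β*γ*α')) * hP2
    rcases mul_eq_zero.mp h with h | h
    · exact absurd h hM
    · exact h
  have fact1 : ((α^3+β^3+γ^3) - 3*(α*β*γ)) * ((α^3+β^3+γ^3) - 3*j*(α*β*γ))
      * ((α^3+β^3+γ^3) - 3*j^2*(α*β*γ)) = 0 := by
    linear_combination key +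
      ((-3*α*β*γ^7) + (-6*α*β^4*γ^4) + (-3*α*β^7*γ) + (27*α^3*β^3*γ^3) + (-6*α^4*β*γ^4) + (-6*α^4*β^4*γ) + (-3*α^7*β*γ) + (9*j*α^2*β^2*γ^5) + (9*j*α^2*β^5*γ^2) + (-27*j*α^3*β^3*γ^3) + (9*j*α^5*β^2*γ^2)) * hj
  rcases mul_eq_zero.mp fact1 with h12 | hc
  · rcases mul_eq_zero.mp h12 with hc | hc
    · -- case ζ' = 1
      have f1 : (α+β+γ) * (α+j*β+j^2*γ) * (α+j^2*β+j*γ) = 0 := by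
        linear_combination hc +
          ((-1*γ^3) + (-1*β^3) + (3*α*β*γ) + (α^2*γ) + (α^2*β) + (j*γ^3) + (j*β^3) + (j*α*γ^2) + (-1*j*α*β*γ) + (j*α*β^2) + (j^2*β*γ^2) + (j^2*β^2*γ) + (j^2*α*β*γ)) * hj
      rcases mul_eq_zero.mp f1 with h12 | h
      · rcases mul_eq_zero.mp h12 with h | h
        · exact absurd (by linear_combination ((α+β)^2 - (α+β)*γ + γ^2) * h) hell
        · exact ⟨1, one_pow 3, Or.inl (by linear_combination j*h - γ*hj3)⟩
      · exact ⟨1, one_pow 3, Or.inr (by linear_combination j^2*h - (γ + j*β)*hj3)⟩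
    · -- case ζ' = j
      have f2 : (α+β+j*γ) * (α+j*β+γ) * (α+j^2*β+j^2*γ) = 0 := by
        linear_combination hc +
          ((-1*γ^3) + (-1*β^3) + (α*β*γ) + (α^2*γ) + (α^2*β) + (j*γ^3) + (j*β^3) + (j*α*γ^2) + (2*j*α*β*γ) + (j*α*β^2) + (j^2*β*γ^2) + (j^2*β^2*γ)) * hj
      rcases mul_eq_zero.mp f2 with h12 | h
      · rcases mul_eq_zero.mp h12 with h | h
        · exact absurd (by linear_combination ((α+β)^2 - (α+β)*j*γ + j^2*γ^2) * h - γ^3*hj3) hell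
        · exact ⟨j, hj3, Or.inl (by linear_combination j*h)⟩
      · exact ⟨j, hj3, Or.inr (by linear_combination j^2*h - j*(β+γ)*hj3)⟩
  · -- case ζ' = j²
    have f3 : (α+β+j^2*γ) * (α+j*β+j*γ) * (α+j^2*β+γ) = 0 := by
      linear_combination hc +
        ((-1*γ^3) + (-1*β^3) + (α*β*γ) + (α^2*γ) + (α^2*β) + (j*γ^3) + (j*β*γ^2) + (j*β^2*γ) + (j*β^3) + (j*α*γ^2) + (j*α*β*γ) + (j*α*β^2) + (-1*j^2*β*γ^2) + (-1*j^2*β^2*γ) + (j^2*α*β*γ) + (j^3*β*γ^2) + (j^3*β^2*γ)) * hj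
    have hz3 : (j^2)^3 = 1 := by linear_combination (j^3 + 1) * hj3
    rcases mul_eq_zero.mp f3 with h12 | h
    · rcases mul_eq_zero.mp h12 with h | h
      · exact absurd (by linear_combination ((α+β)^2 - (α+β)*j^2*γ + j^4*γ^2) * h - (j^3+1)*γ^3*hj3) hell
      · exact ⟨j^2, hz3, Or.inl (by linear_combination j*h)⟩
    · exact ⟨j^2, hz3, Or.inr (by linear_combination j^2*h - j*β*hj3)⟩
end

section
/- Let α, β, γ, α′, β′, γ′ be complex numbers satisfying αα′ + ββ′ + γγ′ = 1 and P₀ = P₁ = P₂ = 0. Then there exists (x, y, z) ∈ ℂ³ with (x, y, z) ≠ (0, 0, 0) such that 3αβγ·x² = (α³+β³+γ³)yz, 3αβγ·y² = (α³+β³+γ³)xz, and 3αβγ·z² = (α³+β³+γ³)xy. -/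
private lemma key_identity (a b c x y z : ℂ)
    (h1 : a + b + c = 1)
    (h2 : a*b + b*c + a*c = 1/4)
    (h3 : b*c*x + a*c*y + a*b*z = 0)
    (h4 : a^2*y*z + b^2*x*z + c^2*x*y = 0) :
    x*y*z*((x+y+z)^3 - 27*(x*y*z)) = 0 := by
  linear_combination ((-48)*b*c^2*x*y^2*z^3 + (96)*b*c^2*x*y^3*z^2 + (-48)*b*c^2*x*y^4*z + (48)*b*c^2*x^2*y*z^3 + (-48)*b*c^2*x^2*y^2*z^2 + (-48)*b*c^2*x^2*y^3*z + (48)*b*c^2*x^2*y^4 + (-48)*b*c^2*x^3*y*z^2 + (96)*b*c^2*x^3*y^2*z + (-48)*b*c^2*x^3*y^3 + (-48)*b^2*c*y^2*z^4 + (96)*b^2*c*y^3*z^3 + (-48)*b^2*c*y^4*z^2 + (96)*b^2*c*x*y*z^4 + (-96)*b^2*c*x*y^2*z^3 + (-48)*b^2*c*x*y^3*z^2 + (48)*b^2*c*x*y^4*z + (-48)*b^2*c*x^2*z^4 + (-96)*b^2*c*x^2*y*z^3 + (192)*b^2*c*x^2*y^2*z^2 + (-48)*b^2*c*x^2*y^3*z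 + (96)*b^2*c*x^3*z^3 + (-48)*b^2*c*x^3*y*z^2 + (-48)*b^2*c*x^3*y^2*z + (-48)*b^2*c*x^4*z^2 + (48)*b^2*c*x^4*y*z + (48)*b^3*x*y^2*z^3 + (-48)*b^3*x*y^3*z^2 + (-96)*b^3*x^2*y*z^3 + (48)*b^3*x^2*y^2*z^2 + (48)*b^3*x^2*y^3*z + (48)*b^3*x^3*z^3 + (48)*b^3*x^3*y*z^2 + (-96)*b^3*x^3*y^2*z + (-48)*b^3*x^4*z^2 + (48)*b^3*x^4*y*z + (48)*a*b^2*y*z^5 + (-96)*a*b^2*y^2*z^4 + (96)*a*b^2*y^3*z^3 + (-48)*a*b^2*y^4*z^2 + (-48)*a*b^2*x*z^5 + (48)*a*b^2*x*y*z^4 + (-48)*a*b^2*x*y^2*z^3 + (48)*a*b^2*x*y^4*z + (48)*a*b^2*x^2*z^4 + (-48)*a*b^2*x^2*y*z^3 + (96)*a*b^2*x^2*y^2*z^2 + (-96)*a*b^2*x^2*y^3*z + (-48)*a*b^2*x^3*y*z^2 + (48)*a*b^2*x^3*y^2*z + (-32)*c^2*x*y^3*z^2 + (16)*c^2*x*y^4*z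 + (-16)*c^2*x^2*y*z^3 + (80)*c^2*x^2*y^2*z^2 + (-16)*c^2*x^2*y^4 + (-80)*c^2*x^3*y^2*z + (32)*c^2*x^3*y^3 + (16)*c^2*x^4*y*z + (-48)*b*c*y^3*z^3 + (48)*b*c*y^4*z^2 + (-48)*b*c*x*y*z^4 + (128)*b*c*x*y^2*z^3 + (-32)*b*c*x*y^3*z^2 + (-64)*b*c*x*y^4*z + (48)*b*c*x^2*z^4 + (-32)*b*c*x^2*y*z^3 + (-96)*b*c*x^2*y^2*z^2 + (128)*b*c*x^2*y^3*z + (-48)*b*c*x^3*z^3 + (80)*b*c*x^3*y*z^2 + (-80)*b*c*x^3*y^2*z + (16)*b*c*x^4*y*z + (16)*b^2*x*y*z^4 + (-32)*b^2*x*y^2*z^3 + (-16)*b^2*x^2*z^4 + (80)*b^2*x^2*y^2*z^2 + (-16)*b^2*x^2*y^3*z + (32)*b^2*x^3*z^3 + (-80)*b^2*x^3*y*z^2 + (16)*b^2*x^4*y*z + (-32)*a*c*y^2*z^4 + (32)*a*c*y^4*z^2 + (32)*a*c*x*y*z^4 + (48)*a*c*x*y^2*z^3 + (-48)*a*c*x*y^3*z^2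 + (-32)*a*c*x*y^4*z + (-48)*a*c*x^2*y*z^3 + (48)*a*c*x^2*y^3*z + (16)*a*c*x^3*y*z^2 + (-16)*a*c*x^3*y^2*z + (-32)*a*b*y*z^5 + (48)*a*b*y^2*z^4 + (-64)*a*b*y^3*z^3 + (48)*a*b*y^4*z^2 + (48)*a*b*x*z^5 + (-48)*a*b*x*y*z^4 + (48)*a*b*x*y^2*z^3 + (16)*a*b*x*y^3*z^2 + (-64)*a*b*x*y^4*z + (-48)*a*b*x^2*z^4 + (64)*a*b*x^2*y*z^3 + (-112)*a*b*x^2*y^2*z^2 + (96)*a*b*x^2*y^3*z + (32)*a*b*x^3*y*z^2 + (-32)*a*b*x^3*y^2*z + (-20)*c*x*y^3*z^2 + (4)*c*x*y^4*z + (-12)*c*x^2*y*z^3 + (52)*c*x^2*y^2*z^2 + (-4)*c*x^2*y^3*z + (-8)*c*x^3*y*z^2 + (-16)*c*x^3*y^2*z + (4)*c*x^4*y*z + (12)*b*y^2*z^4 + (-24)*b*y^3*z^3 + (12)*b*y^4*z^2 + (-8)*b*x*y*z^4 + (4)*b*x*y^2*z^3 + (-12)*b*x*y^4*z + (-4)*b*x^2*y*z^3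 + (28)*b*x^2*y^2*z^2 + (12)*b*x^2*y^3*z + (-4)*b*x^3*y*z^2 + (-20)*b*x^3*y^2*z + (4)*b*x^4*y*z + (12)*a*y^3*z^3 + (-12)*a*y^4*z^2 + (4)*a*x*y*z^4 + (-28)*a*x*y^2*z^3 + (-4)*a*x*y^3*z^2 + (16)*a*x*y^4*z + (-8)*a*x^2*y*z^3 + (64)*a*x^2*y^2*z^2 + (-32)*a*x^2*y^3*z + (-12)*a*x^3*y*z^2 + (12)*y^3*z^3 + (-12)*y^4*z^2 + (4)*x*y*z^4 + (-28)*x*y^2*z^3 + (-4)*x*y^3*z^2 + (16)*x*y^4*z + (-8)*x^2*y*z^3 + (64)*x^2*y^2*z^2 + (-32)*x^2*y^3*z + (-12)*x^3*y*z^2)*h1 + ((48)*b*c*y^2*z^4 + (-96)*b*c*y^3*z^3 + (48)*b*c*y^4*z^2 + (-48)*b*c*x*y*z^4 + (48)*b*c*x*y^2*z^3 + (48)*b*c*x*y^3*z^2 + (-48)*b*c*x*y^4*z + (48)*b*c*x^2*y*z^3 + (-96)*b*c*x^2*y^2*z^2 + (48)*b*c*x^2*y^3*z + (48)*b^2*y^2*z^4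 + (-96)*b^2*y^3*z^3 + (48)*b^2*y^4*z^2 + (-96)*b^2*x*y*z^4 + (96)*b^2*x*y^2*z^3 + (48)*b^2*x*y^3*z^2 + (-48)*b^2*x*y^4*z + (48)*b^2*x^2*z^4 + (96)*b^2*x^2*y*z^3 + (-192)*b^2*x^2*y^2*z^2 + (48)*b^2*x^2*y^3*z + (-96)*b^2*x^3*z^3 + (48)*b^2*x^3*y*z^2 + (48)*b^2*x^3*y^2*z + (48)*b^2*x^4*z^2 + (-48)*b^2*x^4*y*z + (48)*c*y^3*z^3 + (-48)*c*y^4*z^2 + (16)*c*x*y*z^4 + (-112)*c*x*y^2*z^3 + (64)*c*x*y^3*z^2 + (48)*c*x*y^4*z + (16)*c*x^2*y*z^3 + (48)*c*x^2*y^2*z^2 + (-112)*c*x^2*y^3*z + (-16)*c*x^3*y*z^2 + (64)*c*x^3*y^2*z + (-16)*c*x^4*y*z + (-48)*b*y^2*z^4 + (144)*b*y^3*z^3 + (-96)*b*y^4*z^2 + (48)*b*x*y*z^4 + (-128)*b*x*y^2*z^3 + (-16)*b*x*y^3*z^2 + (112)*b*x*y^4*z + (-16)*b*x^2*y*z^3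 + (144)*b*x^2*y^2*z^2 + (-176)*b*x^2*y^3*z + (-32)*b*x^3*y*z^2 + (80)*b*x^3*y^2*z + (-16)*b*x^4*y*z + (-48)*y^3*z^3 + (48)*y^4*z^2 + (-20)*x*y*z^4 + (100)*x*y^2*z^3 + (4)*x*y^3*z^2 + (-68)*x*y^4*z + (20)*x^2*y*z^3 + (-172)*x^2*y^2*z^2 + (116)*x^2*y^3*z + (36)*x^3*y*z^2 + (-12)*x^3*y^2*z + (-4)*x^4*y*z)*h2 + ((-48)*b*c*y*z^4 + (96)*b*c*y^2*z^3 + (-48)*b*c*y^3*z^2 + (48)*b*c*x*z^4 + (-144)*b*c*x*y^2*z^2 + (96)*b*c*x*y^3*z + (-96)*b*c*x^2*z^3 + (144)*b*c*x^2*y*z^2 + (-48)*b*c*x^2*y^3 + (48)*b*c*x^3*z^2 + (-96)*b*c*x^3*y*z + (48)*b*c*x^3*y^2 + (-48)*b^2*y*z^4 + (48)*b^2*y^2*z^3 + (48)*b^2*x*z^4 + (48)*b^2*x*y*z^3 + (-96)*b^2*x*y^2*z^2 + (-96)*b^2*x^2*z^3 + (48)*b^2*x^2*y*z^2 + (48)*b^2*x^2*y^2*z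 + (48)*b^2*x^3*z^2 + (-48)*b^2*x^3*y*z + (-48)*a*b*y*z^4 + (96)*a*b*y^2*z^3 + (-48)*a*b*y^3*z^2 + (48)*a*b*x*z^4 + (-48)*a*b*x*y*z^3 + (-48)*a*b*x*y^2*z^2 + (48)*a*b*x*y^3*z + (-48)*a*b*x^2*z^3 + (96)*a*b*x^2*y*z^2 + (-48)*a*b*x^2*y^2*z + (32)*c*y*z^4 + (-48)*c*y^2*z^3 + (16)*c*y^3*z^2 + (-48)*c*x*z^4 + (64)*c*x*y*z^3 + (16)*c*x*y^2*z^2 + (-32)*c*x*y^3*z + (48)*c*x^2*z^3 + (-128)*c*x^2*y*z^2 + (64)*c*x^2*y^2*z + (16)*c*x^2*y^3 + (32)*c*x^3*y*z + (-32)*c*x^3*y^2 + (80)*b*y*z^4 + (-96)*b*y^2*z^3 + (16)*b*y^3*z^2 + (-96)*b*x*z^4 + (32)*b*x*y*z^3 + (64)*b*x*y^2*z^2 + (112)*b*x^2*z^3 + (-96)*b*x^2*y*z^2 + (-16)*b*x^2*y^2*z + (-32)*b*x^3*z^2 + (32)*b*x^3*y*z + (32)*a*y*z^4 + (-32)*a*y^2*z^3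 + (-16)*a*y^3*z^2 + (-48)*a*x*z^4 + (32)*a*x*y*z^3 + (48)*a*x*y^2*z^2 + (16)*a*x*y^3*z + (48)*a*x^2*z^3 + (-80)*a*x^2*y*z^2 + (-16)*a*x^2*y^2*z + (16)*a*x^3*y*z + (-32)*y*z^4 + (36)*y^2*z^3 + (-4)*y^3*z^2 + (48)*x*z^4 + (-24)*x*y*z^3 + (-28)*x*y^2*z^2 + (16)*x*y^3*z + (-48)*x^2*z^3 + (56)*x^2*y*z^2 + (-32)*x^2*y^2*z + (12)*x^3*y*z)*h3 + ((48)*b*c*y*z^3 + (-96)*b*c*y^2*z^2 + (48)*b*c*y^3*z + (-48)*b*c*x*z^3 + (48)*b*c*x*y*z^2 + (48)*b*c*x*y^2*z + (-48)*b*c*x*y^3 + (48)*b*c*x^2*z^2 + (-96)*b*c*x^2*y*z + (48)*b*c*x^2*y^2 + (-48)*b^2*y^2*z^2 + (48)*b^2*y^3*z + (96)*b^2*x*y*z^2 + (-48)*b^2*x*y^2*z + (-48)*b^2*x*y^3 + (-48)*b^2*x^2*z^2 + (-48)*b^2*x^2*y*z + (96)*b^2*x^2*y^2 + (48)*b^2*x^3*z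 + (-48)*b^2*x^3*y + (32)*c*y^2*z^2 + (-16)*c*y^3*z + (16)*c*x*z^3 + (-80)*c*x*y*z^2 + (16)*c*x*y^3 + (80)*c*x^2*y*z + (-32)*c*x^2*y^2 + (-16)*c*x^3*z + (-16)*b*y*z^3 + (80)*b*y^2*z^2 + (-48)*b*y^3*z + (16)*b*x*z^3 + (-96)*b*x*y*z^2 + (-32)*b*x*y^2*z + (64)*b*x*y^3 + (16)*b*x^2*z^2 + (128)*b*x^2*y*z + (-96)*b*x^2*y^2 + (-48)*b*x^3*z + (32)*b*x^3*y + (-12)*y^2*z^2 + (12)*y^3*z + (-4)*x*z^3 + (28)*x*y*z^2 + (4)*x*y^2*z + (-16)*x*y^3 + (8)*x^2*z^2 + (-64)*x^2*y*z + (32)*x^2*y^2 + (12)*x^3*z)*h4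


theorem stmt_12 (α β γ α' β' γ' : ℂ)
    (hnorm : α*α' + β*β' + γ*γ' = 1)
    (hP0 : α^2*α'^2 + β^2*β'^2 + γ^2*γ'^2
      - 2*(α*α')*(β*β') - 2*(α*α')*(γ*γ') - 2*(β*β')*(γ*γ') = 0)
    (hP1 : α^2*β'*γ' + β^2*α'*γ' + γ^2*α'*β' = 0)
    (hP2 : α'^2*β*γ + β'^2*α*γ + γ'^2*α*β = 0) :
    ∃ x y z : ℂ, (x, y, z) ≠ (0, 0, 0) ∧
      3*α*β*γ*x^2 = (α^3 + β^3 + γ^3)*y*z ∧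
      3*α*β*γ*y^2 = (α^3 + β^3 + γ^3)*x*z ∧
      3*α*β*γ*z^2 = (α^3 + β^3 + γ^3)*x*y := by
  by_cases hp : α*β*γ = 0
  · refine ⟨1, 0, 0, ?_, ?_, ?_, ?_⟩
    · simp
    · linear_combination 3*hp
    · ring
    · ring
  · -- the nondegenerate case: show (α³+β³+γ³)³ = 27(αβγ)³
    set a : ℂ := α*α' with ha
    set b : ℂ := β*β' with hb
    set c : ℂ := γ*γ' with hc
    have h1 : a + b + c = 1 := hnorm
    have h2 : a*b + b*c + a*c = 1/4 := by
      linear_combination ((a+b+c+1)/4)*hnorm - (1/4)*hP0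
    have h3 : b*c*(α^3) + a*c*(β^3) + a*b*(γ^3) = 0 := by
      linear_combination (α*β*γ)*hP1
    have h4 : a^2*(β^3)*(γ^3) + b^2*(α^3)*(γ^3) + c^2*(α^3)*(β^3) = 0 := by
      linear_combination (α^2*β^2*γ^2)*hP2
    have hkey := key_identity a b c (α^3) (β^3) (γ^3) h1 h2 h3 h4
    have hxyz : (α^3)*(β^3)*(γ^3) ≠ 0 := by
      intro h
      apply hp
      have : (α*β*γ)^9 = 0 := by linear_combination (α^3*β^3*γ^3)^2 * h
      exact pow_eq_zero_iff (by norm_num) |>.mp this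
    have hs : (α^3 + β^3 + γ^3)^3 = 27*((α^3)*(β^3)*(γ^3)) := by
      rcases mul_eq_zero.mp hkey with h | h
      · exact absurd h hxyz
      · linear_combination h
    refine ⟨9*(α*β*γ)^2, 9*(α*β*γ)^2, (α^3+β^3+γ^3)^2, ?_, ?_, ?_, ?_⟩
    · intro h
      have h1' : (9:ℂ)*(α*β*γ)^2 = 0 := congrArg (·.1) h
      exact hp (by
        have := mul_eq_zero.mp h1'
        rcases this with h' | h'
        · norm_num at h'
        · exact pow_eq_zero_iff (by norm_num) |>.mp h')
    · linear_combination (-9)*(α*β*γ)^2*hs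
    · linear_combination (-9)*(α*β*γ)^2*hs
    · linear_combination 3*(α*β*γ)*(α^3+β^3+γ^3)*hs
end

section
/- Let t be a complex number with t ≠ 0 and t³ ≠ 1. Let M be the associative unital ℂ-algebra presented by generators x₁, x₂, x₃, y₁, y₂, y₃ and relations x₃x₂ = t x₁², x₁x₃ = t x₂², x₂x₁ = t x₃², t y₂y₃ = y₁², t y₃y₁ = y₂², t y₁y₂ = y₃², y₁x₁ = x₂y₂, y₂x₁ = t x₂y₃, t y₃x₁ = x₂y₁, t y₁x₂ = x₃y₂, y₂x₂ = x₃y₃, y₃x₂ = t x₃y₁, y₁x₃ = t x₁y₂, t y₂x₃ = x₁y₃, y₃x₃ = x₁y₁, and x₁y₁ + x₂y₂ + x₃y₃ = 0 (i.e., M is the quotient of the free ℂ-algebra on six generators by the two-sided ideal generated by these sixteen elements). Then every ℂ-algebra homomorphism φ : M → ℂ sends all six generators to 0. -/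
/-- The six generators `x₁, x₂, x₃, y₁, y₂, y₃` of the free `ℂ`-algebra,
as `Xg 0, Xg 1, Xg 2, Xg 3, Xg 4, Xg 5` respectively. -/
def Xg (i : Fin 6) : FreeAlgebra ℂ (Fin 6) := FreeAlgebra.ι ℂ i

/-- The sixteen defining relations of the shape algebra of the Case I.h
basic quantum SL(3) datum with parameter `t`, where
`x₁ = Xg 0, x₂ = Xg 1, x₃ = Xg 2, y₁ = Xg 3, y₂ = Xg 4, y₃ = Xg 5`. -/
inductive ShapeRel (t : ℂ) : FreeAlgebra ℂ (Fin 6) → FreeAlgebra ℂ (Fin 6) → Prop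
  /-- x₃x₂ = t x₁² -/
  | r1 : ShapeRel t (Xg 2 * Xg 1) (t • (Xg 0 * Xg 0))
  /-- x₁x₃ = t x₂² -/
  | r2 : ShapeRel t (Xg 0 * Xg 2) (t • (Xg 1 * Xg 1))
  /-- x₂x₁ = t x₃² -/
  | r3 : ShapeRel t (Xg 1 * Xg 0) (t • (Xg 2 * Xg 2))
  /-- t y₂y₃ = y₁² -/
  | r4 : ShapeRel t (t • (Xg 4 * Xg 5)) (Xg 3 * Xg 3)
  /-- t y₃y₁ = y₂² -/
  | r5 : ShapeRel t (t • (Xg 5 * Xg 3)) (Xg 4 * Xg 4)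
  /-- t y₁y₂ = y₃² -/
  | r6 : ShapeRel t (t • (Xg 3 * Xg 4)) (Xg 5 * Xg 5)
  /-- y₁x₁ = x₂y₂ -/
  | r7 : ShapeRel t (Xg 3 * Xg 0) (Xg 1 * Xg 4)
  /-- y₂x₁ = t x₂y₃ -/
  | r8 : ShapeRel t (Xg 4 * Xg 0) (t • (Xg 1 * Xg 5))
  /-- t y₃x₁ = x₂y₁ -/
  | r9 : ShapeRel t (t • (Xg 5 * Xg 0)) (Xg 1 * Xg 3)
  /-- t y₁x₂ = x₃y₂ -/
  | r10 : ShapeRel t (t • (Xg 3 * Xg 1)) (Xg 2 * Xg 4)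
  /-- y₂x₂ = x₃y₃ -/
  | r11 : ShapeRel t (Xg 4 * Xg 1) (Xg 2 * Xg 5)
  /-- y₃x₂ = t x₃y₁ -/
  | r12 : ShapeRel t (Xg 5 * Xg 1) (t • (Xg 2 * Xg 3))
  /-- y₁x₃ = t x₁y₂ -/
  | r13 : ShapeRel t (Xg 3 * Xg 2) (t • (Xg 0 * Xg 4))
  /-- t y₂x₃ = x₁y₃ -/
  | r14 : ShapeRel t (t • (Xg 4 * Xg 2)) (Xg 0 * Xg 5)
  /-- y₃x₃ = x₁y₁ -/
  | r15 : ShapeRel t (Xg 5 * Xg 2) (Xg 0 * Xg 3)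
  /-- x₁y₁ + x₂y₂ + x₃y₃ = 0 -/
  | r16 : ShapeRel t (Xg 0 * Xg 3 + Xg 1 * Xg 4 + Xg 2 * Xg 5) 0


private lemma auxX (t x1 x2 x3 : ℂ) (ht0 : t ≠ 0) (ht1 : t^3 ≠ 1)
    (h1 : x3 * x2 = t * (x1 * x1)) (h2 : x1 * x3 = t * (x2 * x2))
    (h3 : x2 * x1 = t * (x3 * x3)) : x1 = 0 ∧ x2 = 0 ∧ x3 = 0 := by
  have key : (x1 * x2 * x3) ^ 2 * (t ^ 3 - 1) = 0 := by
    linear_combination (-(x1 * x3) * (x2 * x1)) * h1 + (-(t * (x1 * x1)) * (x2 * x1)) * h2 +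
      (-(t ^ 2 * (x1 * x1) * (x2 * x2))) * h3
  have hp : x1 * x2 * x3 = 0 := by
    have hne : t ^ 3 - 1 ≠ 0 := sub_ne_zero.mpr ht1
    have := (mul_eq_zero.mp key).resolve_right hne
    exact pow_eq_zero_iff (n := 2) (by norm_num) |>.mp this
  rcases mul_eq_zero.mp hp with hp | h3z
  · rcases mul_eq_zero.mp hp with h1z | h2z
    · have h2z : x2 = 0 := by
        have : t * (x2 * x2) = 0 := by rw [← h2, h1z]; ring
        have := (mul_eq_zero.mp this).resolve_left ht0
        simpa [mul_self_eq_zero] using this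
      have h3z : x3 = 0 := by
        have : t * (x3 * x3) = 0 := by rw [← h3, h2z]; ring
        have := (mul_eq_zero.mp this).resolve_left ht0
        simpa [mul_self_eq_zero] using this
      exact ⟨h1z, h2z, h3z⟩
    · have h3z : x3 = 0 := by
        have : t * (x3 * x3) = 0 := by rw [← h3, h2z]; ring
        have := (mul_eq_zero.mp this).resolve_left ht0
        simpa [mul_self_eq_zero] using this
      have h1z : x1 = 0 := by
        have : t * (x1 * x1) = 0 := by rw [← h1, h3z]; ring
        have := (mul_eq_zero.mp this).resolve_left ht0
        simpa [mul_self_eq_zero] using this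
      exact ⟨h1z, h2z, h3z⟩
  · have h1z : x1 = 0 := by
      have : t * (x1 * x1) = 0 := by rw [← h1, h3z]; ring
      have := (mul_eq_zero.mp this).resolve_left ht0
      simpa [mul_self_eq_zero] using this
    have h2z : x2 = 0 := by
      have : t * (x2 * x2) = 0 := by rw [← h2, h1z]; ring
      have := (mul_eq_zero.mp this).resolve_left ht0
      simpa [mul_self_eq_zero] using this
    exact ⟨h1z, h2z, h3z⟩

private lemma auxY (t y1 y2 y3 : ℂ) (ht0 : t ≠ 0) (ht1 : t^3 ≠ 1)
    (h1 : t * (y2 * y3) = y1 * y1) (h2 : t * (y3 * y1) = y2 * y2)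
    (h3 : t * (y1 * y2) = y3 * y3) : y1 = 0 ∧ y2 = 0 ∧ y3 = 0 := by
  have key : (y1 * y2 * y3) ^ 2 * (t ^ 3 - 1) = 0 := by
    linear_combination (t ^ 2 * (y3 * y1) * (y1 * y2)) * h1 + (t * (y1 * y1) * (y1 * y2)) * h2 +
      ((y1 * y1) * (y2 * y2)) * h3
  have hp : y1 * y2 * y3 = 0 := by
    have hne : t ^ 3 - 1 ≠ 0 := sub_ne_zero.mpr ht1
    have := (mul_eq_zero.mp key).resolve_right hne
    exact pow_eq_zero_iff (n := 2) (by norm_num) |>.mp this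
  rcases mul_eq_zero.mp hp with hp | h3z
  · rcases mul_eq_zero.mp hp with h1z | h2z
    · have h3z : y3 = 0 := by
        have : y3 * y3 = 0 := by rw [← h3, h1z]; ring
        simpa [mul_self_eq_zero] using this
      have h2z : y2 = 0 := by
        have : y2 * y2 = 0 := by rw [← h2, h3z]; ring
        simpa [mul_self_eq_zero] using this
      exact ⟨h1z, h2z, h3z⟩
    · have h1z : y1 = 0 := by
        have : y1 * y1 = 0 := by rw [← h1, h2z]; ring
        simpa [mul_self_eq_zero] using this
      have h3z : y3 = 0 := by
        have : y3 * y3 = 0 := by rw [← h3, h1z]; ring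
        simpa [mul_self_eq_zero] using this
      exact ⟨h1z, h2z, h3z⟩
  · have h1z : y1 = 0 := by
      have : y1 * y1 = 0 := by rw [← h1, h3z]; ring
      simpa [mul_self_eq_zero] using this
    have h2z : y2 = 0 := by
      have : y2 * y2 = 0 := by rw [← h2, h1z]; ring
      simpa [mul_self_eq_zero] using this
    exact ⟨h1z, h2z, h3z⟩

theorem stmt_15 (t : ℂ) (ht0 : t ≠ 0) (ht1 : t^3 ≠ 1)
    (φ : RingQuot (ShapeRel t) →ₐ[ℂ] ℂ) (i : Fin 6) :
    φ (RingQuot.mkAlgHom ℂ (ShapeRel t) (Xg i)) = 0 :=  by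
  set a : Fin 6 → ℂ := fun j => φ (RingQuot.mkAlgHom ℂ (ShapeRel t) (Xg j)) with ha
  show a i = 0
  have rel : ∀ u v, ShapeRel t u v →
      φ (RingQuot.mkAlgHom ℂ (ShapeRel t) u) = φ (RingQuot.mkAlgHom ℂ (ShapeRel t) v) :=
    fun u v h => congrArg φ (RingQuot.mkAlgHom_rel ℂ h)
  have h1 : a 2 * a 1 = t * (a 0 * a 0) := by
    simpa [map_mul, map_smul, smul_eq_mul, ha] using rel _ _ (ShapeRel.r1 (t := t))
  have h2 : a 0 * a 2 = t * (a 1 * a 1) := by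
    simpa [map_mul, map_smul, smul_eq_mul, ha] using rel _ _ (ShapeRel.r2 (t := t))
  have h3 : a 1 * a 0 = t * (a 2 * a 2) := by
    simpa [map_mul, map_smul, smul_eq_mul, ha] using rel _ _ (ShapeRel.r3 (t := t))
  have h4 : t * (a 4 * a 5) = a 3 * a 3 := by
    simpa [map_mul, map_smul, smul_eq_mul, ha] using rel _ _ (ShapeRel.r4 (t := t))
  have h5 : t * (a 5 * a 3) = a 4 * a 4 := by
    simpa [map_mul, map_smul, smul_eq_mul, ha] using rel _ _ (ShapeRel.r5 (t := t))
  have h6 : t * (a 3 * a 4) = a 5 * a 5 := by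
    simpa [map_mul, map_smul, smul_eq_mul, ha] using rel _ _ (ShapeRel.r6 (t := t))
  obtain ⟨hx1, hx2, hx3⟩ := auxX t (a 0) (a 1) (a 2) ht0 ht1 h1 h2 h3
  obtain ⟨hy1, hy2, hy3⟩ := auxY t (a 3) (a 4) (a 5) ht0 ht1 h4 h5 h6
  fin_cases i <;> assumption
end
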